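/- For every r > 0, every real x < −sinh r, and every real y with y ≠ x, the geodesic γ(x,y) with ideal endpoints x and y intersects the closed hyperbolic disc B̄_r(i) if and only if −W_r(−x) ≤ y ≤ −U_r(−x). -/

import Mathlib

/-!
The closed hyperbolic disc `B̄_r(i)` is the Euclidean disc of radius `sinh r` about `i cosh r`,
and `γ(x,y)` is the upper half of the circle of radius `R = |x - y|/2` about `c = (x + y)/2`.
By the triangle inequality a circle of radius `R` about `c` meets a closed disc of radius `s`
about `p` iff `|dist p c - R| ≤ s`, the nearest point being the one on the ray from `c` to `p`,
which lies in `ℍ`. Squaring twice turns this into `(x² + 1)(y² + 1) ≤ (x - y)² cosh² r`, a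
quadratic inequality in `y` with leading coefficient `x² - sinh² r > 0` whose roots are
`-W_r(-x)` and `-U_r(-x)`.
-/

open UpperHalfPlane MeasureTheory

/-- The complete hyperbolic geodesic of the upper half-plane with ideal endpoints `a` and `b`:
the Euclidean semicircle `{z ∈ ℍ : |z − (a+b)/2| = |a−b|/2}`. -/
noncomputable def geodesic (a b : ℝ) : Set ℍ :=
  {z : ℍ | ‖(z : ℂ) - (((a + b) / 2 : ℝ) : ℂ)‖ = |a - b| / 2}

/-- The geodesic `γ(a,b)` is tangent to the hyperbolic disc `B_ρ(i)`:
the infimum of the hyperbolic distance from points of the geodesic to `i` equals `ρ`. -/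
def TangentToDisc (a b ρ : ℝ) : Prop :=
  sInf ((fun z : ℍ => dist z UpperHalfPlane.I) '' geodesic a b) = ρ

/-- The geodesic `γ(a,b)` intersects the closed hyperbolic disc `B̄_r(i)`. -/
def MeetsClosedDisc (a b r : ℝ) : Prop :=
  ∃ z ∈ geodesic a b, dist z UpperHalfPlane.I ≤ r

section NormedSpace

variable {E : Type*} [NormedAddCommGroup E] [NormedSpace ℝ E] {c p : E} {R : ℝ}

theorem dist_lineMap_div_dist_left (hpc : p ≠ c) (hR : 0 ≤ R) :
    dist (AffineMap.lineMap c p (R / dist p c)) c = R := by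
  have hd : 0 < dist p c := dist_pos.2 hpc
  rw [dist_lineMap_left, Real.norm_of_nonneg (by positivity), dist_comm c p,
    div_mul_cancel₀ _ hd.ne']

theorem dist_lineMap_div_dist_right (hpc : p ≠ c) :
    dist (AffineMap.lineMap c p (R / dist p c)) p = |dist p c - R| := by
  have hd : 0 < dist p c := dist_pos.2 hpc
  rw [dist_lineMap_right, Real.norm_eq_abs, dist_comm c p, ← abs_of_pos hd, ← abs_mul,
    abs_of_pos hd, sub_mul, one_mul, div_mul_cancel₀ _ hd.ne']

end NormedSpace

theorem abs_sub_le_iff_sq_le {d R s : ℝ} (hR : 0 ≤ R) (hs : 0 ≤ s) (hsd : s ≤ d) :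
    |d - R| ≤ s ↔ (d ^ 2 + R ^ 2 - s ^ 2) ^ 2 ≤ (2 * R * d) ^ 2 := by
  have hd : 0 ≤ d := hs.trans hsd
  rw [← sq_le_sq₀ (abs_nonneg _) hs, sq_abs,
    sq_le_sq₀ (by nlinarith [mul_self_le_mul_self hs hsd] : 0 ≤ d ^ 2 + R ^ 2 - s ^ 2)
      (by positivity : 0 ≤ 2 * R * d)]
  constructor <;> intro h <;> linarith

theorem mem_geodesic_iff {a b : ℝ} {z : ℍ} :
    z ∈ geodesic a b ↔ dist (z : ℂ) ((a + b) / 2 : ℝ) = |a - b| / 2 := by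
  rw [Complex.dist_eq]; rfl

theorem dist_I_le_iff {z : ℍ} {r : ℝ} :
    dist z I ≤ r ↔ dist (z : ℂ) (I.center r) ≤ Real.sinh r := by
  rw [dist_le_iff_dist_coe_center_le, I_im, one_mul]

theorem cosh_le_dist_center_ofReal (r t : ℝ) :
    Real.cosh r ≤ dist (I.center r : ℂ) t := by
  calc Real.cosh r = |((I.center r : ℂ) - t).im| := by
        simp [center_im, abs_of_pos (Real.cosh_pos r)]
    _ ≤ dist (I.center r : ℂ) t :=
        (Complex.abs_im_le_norm _).trans_eq (Complex.dist_eq _ _).symm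

theorem dist_center_ofReal_sq (r t : ℝ) :
    dist (I.center r : ℂ) t ^ 2 = t ^ 2 + Real.cosh r ^ 2 := by
  simp only [Complex.dist_eq, Complex.sq_norm, Complex.normSq_apply, Complex.sub_re,
    Complex.sub_im, coe_re, coe_im, center_re, center_im, I_re, I_im, Complex.ofReal_re,
    Complex.ofReal_im]
  ring

theorem meetsClosedDisc_iff_abs_sub_le (a b r : ℝ) :
    MeetsClosedDisc a b r ↔
      |dist (I.center r : ℂ) ((a + b) / 2 : ℝ) - |a - b| / 2| ≤ Real.sinh r := by
  set p : ℂ := ↑(I.center r)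
  set c : ℂ := (((a + b) / 2 : ℝ) : ℂ)
  constructor
  · rintro ⟨z, hz, hzr⟩
    rw [mem_geodesic_iff] at hz
    rw [dist_I_le_iff] at hzr
    calc |dist p c - |a - b| / 2| = |dist p c - dist (z : ℂ) c| := by rw [hz]
      _ ≤ dist p z := abs_dist_sub_le _ _ _
      _ ≤ Real.sinh r := by rwa [dist_comm]
  · intro h
    have hcosh := cosh_le_dist_center_ofReal r ((a + b) / 2)
    have hpc : p ≠ c := dist_pos.1 ((Real.cosh_pos r).trans_le hcosh)
    have hR : 0 < |a - b| / 2 := by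
      linarith [le_abs_self (dist p c - |a - b| / 2), Real.sinh_lt_cosh r]
    set w := AffineMap.lineMap c p (|a - b| / 2 / dist p c)
    have hw : 0 < w.im := by
      simp only [w, AffineMap.lineMap_apply_module, Complex.add_im, Complex.real_smul,
        Complex.mul_im, p, c, coe_im, center_im, I_im, Complex.ofReal_im, Complex.ofReal_re,
        mul_zero, zero_mul, one_mul, zero_add, add_zero]
      exact mul_pos (div_pos hR ((Real.cosh_pos r).trans_le hcosh)) (Real.cosh_pos r)
    exact ⟨⟨w, hw⟩, mem_geodesic_iff.2 (dist_lineMap_div_dist_left hpc hR.le),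
      dist_I_le_iff.2 ((dist_lineMap_div_dist_right hpc).trans_le h)⟩

theorem meetsClosedDisc_iff_mul_le {a b r : ℝ} (hr : 0 ≤ r) :
    MeetsClosedDisc a b r ↔ (a ^ 2 + 1) * (b ^ 2 + 1) ≤ (a - b) ^ 2 * Real.cosh r ^ 2 := by
  set d := dist (I.center r : ℂ) ((a + b) / 2 : ℝ)
  have hd : d ^ 2 = ((a + b) / 2) ^ 2 + Real.cosh r ^ 2 := dist_center_ofReal_sq r _
  have hR : (|a - b| / 2) ^ 2 = (a - b) ^ 2 / 4 := by rw [div_pow, sq_abs]; norm_num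
  have hs : Real.sinh r ^ 2 = Real.cosh r ^ 2 - 1 := by rw [Real.cosh_sq']; ring
  rw [meetsClosedDisc_iff_abs_sub_le, abs_sub_le_iff_sq_le (by positivity)
    (Real.sinh_nonneg_iff.2 hr) ((Real.sinh_lt_cosh r).le.trans (cosh_le_dist_center_ofReal r _))]
  have hl : (d ^ 2 + (|a - b| / 2) ^ 2 - Real.sinh r ^ 2) ^ 2 =
      (a ^ 2 + 1) * (b ^ 2 + 1) + (a ^ 2 - b ^ 2) ^ 2 / 4 := by
    rw [hd, hR, hs]; ring
  have hr' : (2 * (|a - b| / 2) * d) ^ 2 =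
      (a - b) ^ 2 * Real.cosh r ^ 2 + (a ^ 2 - b ^ 2) ^ 2 / 4 := by
    rw [mul_pow, mul_pow, hd, hR]; ring
  rw [hl, hr', add_le_add_iff_right]

theorem mul_le_mul_one_add_sq_iff {s x y : ℝ} (hs : 0 < s) (hx : s ^ 2 < x ^ 2) :
    (x ^ 2 + 1) * (y ^ 2 + 1) ≤ (x - y) ^ 2 * (1 + s ^ 2) ↔
      -((-x * s - 1) / (-x + s)) ≤ y ∧ y ≤ -((-x * s + 1) / (x + s)) := by
  have hden₁ : -x + s ≠ 0 := fun h => by nlinarith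
  have hden₂ : x + s ≠ 0 := fun h => by nlinarith
  set y₁ := -((-x * s - 1) / (-x + s))
  set y₂ := -((-x * s + 1) / (x + s))
  have hfactor : (x ^ 2 + 1) * (y ^ 2 + 1) - (x - y) ^ 2 * (1 + s ^ 2) =
      (x ^ 2 - s ^ 2) * ((y - y₁) * (y - y₂)) := by
    simp only [y₁, y₂]; field_simp; ring
  have hgap : (y₂ - y₁) * (x ^ 2 - s ^ 2) = 2 * s * (x ^ 2 + 1) := by
    simp only [y₁, y₂]; field_simp; ring
  have hy₁₂ : y₁ ≤ y₂ := by nlinarith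
  rw [← sub_nonpos, hfactor, ← mul_zero (x ^ 2 - s ^ 2),
    mul_le_mul_iff_of_pos_left (sub_pos.2 hx)]
  constructor
  · intro h; constructor <;> nlinarith
  · rintro ⟨hy₁, hy₂⟩; exact mul_nonpos_of_nonneg_of_nonpos (by linarith) (by linarith)

theorem meets_iff_of_lt_neg_sinh_general (r : ℝ) (hr : 0 < r) (x : ℝ) (hx : x < -Real.sinh r)
    (y : ℝ) :
    MeetsClosedDisc x y r ↔
      -((-x * Real.sinh r - 1) / (-x + Real.sinh r)) ≤ y ∧
        y ≤ -((-x * Real.sinh r + 1) / (x + Real.sinh r)) := by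
  have hs : 0 < Real.sinh r := Real.sinh_pos_iff.2 hr
  rw [meetsClosedDisc_iff_mul_le hr.le, Real.cosh_sq']
  exact mul_le_mul_one_add_sq_iff hs (by nlinarith)

/-- For every r > 0, every real x < −sinh r, and every real y ≠ x, the geodesic γ(x,y)
intersects the closed disc B̄_r(i) iff −W_r(−x) ≤ y ≤ −U_r(−x). -/
theorem meets_iff_of_lt_neg_sinh (r : ℝ) (hr : 0 < r) (x : ℝ) (hx : x < -Real.sinh r)
    (y : ℝ) (hy : y ≠ x) :
    MeetsClosedDisc x y r ↔
      -((-x * Real.sinh r - 1) / (-x + Real.sinh r)) ≤ y ∧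
        y ≤ -((-x * Real.sinh r + 1) / (x + Real.sinh r)) :=
  meets_iff_of_lt_neg_sinh_general r hr x hx y
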